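/- The 'jeu-de-bumping' straightening process terminates: starting from any 2-row array with strictly increasing rows whose entries partition {1,...,2n}, repeatedly applying the move (find smallest i with top entry c_i > bottom entry d_i, then form the new array with top row d_1,...,d_{i-1}, d_i, c_i, c_{i+1},...,c_r and bottom row c_1,...,c_{i-1}, d_{i+1},...,d_s) terminates in finitely many steps at a standard Young tableau with at most two rows and 2n cells. -/

import Mathlib

/-- The hook-shaped Young diagram `(k+1, 1^(n-k))`, a partition of `n+1` (for `k ≤ n`). -/
def hookDiagram (n k : ℕ) : YoungDiagram :=
  YoungDiagram.ofRowLens ((k + 1) :: List.replicate (n - k) 1) (by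
    refine List.sortedGE_iff_pairwise.mpr (List.pairwise_cons.mpr ⟨?_, ?_⟩)
    · intro b hb
      rw [List.eq_of_mem_replicate hb]
      omega
    · rw [List.pairwise_replicate]
      right; rfl)

/-- The Young diagram `(k+2, 1^(n-k))`, obtained from the hook `(k+1, 1^(n-k))` by adding one
cell to its first row. -/
def hookPlusDiagram (n k : ℕ) : YoungDiagram :=
  YoungDiagram.ofRowLens ((k + 2) :: List.replicate (n - k) 1) (by
    refine List.sortedGE_iff_pairwise.mpr (List.pairwise_cons.mpr ⟨?_, ?_⟩)
    · intro b hb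
      rw [List.eq_of_mem_replicate hb]
      omega
    · rw [List.pairwise_replicate]
      right; rfl)

/-- The two-row Young diagram with rows `max a b ≥ min a b`. -/
def twoRowDiagram (a b : ℕ) : YoungDiagram :=
  YoungDiagram.ofRowLens [max a b, min a b] (by
    refine List.sortedGE_iff_pairwise.mpr (List.pairwise_cons.mpr ⟨?_, List.pairwise_singleton _ _⟩)
    intro c hc
    simp at hc
    omega)

/-- A standard Young tableau of shape `μ`: a filling of the cells of `μ` with the numbers
`1, …, |μ|`, each used exactly once, strictly increasing along rows and down columns. -/
structure SYT (μ : YoungDiagram) where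
  entry : ℕ × ℕ → ℕ
  bijOn : Set.BijOn entry ↑μ.cells (Set.Icc 1 μ.card)
  row_strict : ∀ i j1 j2, j1 < j2 → (i, j2) ∈ μ → entry (i, j1) < entry (i, j2)
  col_strict : ∀ i1 i2 j, i1 < i2 → (i2, j) ∈ μ → entry (i1, j) < entry (i2, j)

/-- A `2 × n` row-increasing matrix: two strictly increasing rows whose entries are
exactly `{1, …, 2n}`. -/
structure RowIncMatrix (n : ℕ) where
  a : Fin n → ℕ
  b : Fin n → ℕ
  ha : StrictMono a
  hb : StrictMono b
  disj : Disjoint (Finset.univ.image a) (Finset.univ.image b)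
  cover : Finset.univ.image a ∪ Finset.univ.image b = Finset.Icc 1 (2 * n)
/-- A 2-row array of shape `(r, s)` with `s ≤ r`, `r + s = N`: strictly increasing rows
whose entries together are exactly `{1, …, N}`. -/
structure TwoRowArray (N : ℕ) where
  r : ℕ
  s : ℕ
  hrs : s ≤ r
  hsum : r + s = N
  c : Fin r → ℕ
  d : Fin s → ℕ
  hc : StrictMono c
  hd : StrictMono d
  disj : Disjoint (Finset.univ.image c) (Finset.univ.image d)
  cover : Finset.univ.image c ∪ Finset.univ.image d = Finset.Icc 1 N

/-- A 2-row array is a standard Young tableau when every column increases downwards,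
i.e. `c_j < d_j` for all `j` in the bottom row. -/
def TwoRowArray.IsStandard {N : ℕ} (M : TwoRowArray N) : Prop :=
  ∀ j : Fin M.s, M.c (j.castLE M.hrs) < M.d j

/-- One step of the straightening ('jeu-de-bumping') process: find the smallest `i` with
`c_i > d_i`, and replace the array by the one with top row
`d_1, …, d_{i-1}, d_i, c_i, c_{i+1}, …, c_r` and bottom row
`c_1, …, c_{i-1}, d_{i+1}, …, d_s`. -/
def MoveRel {N : ℕ} (M M' : TwoRowArray N) : Prop :=
  ∃ i : Fin M.s,
    (∀ j : Fin M.s, (j : ℕ) < (i : ℕ) → M.c (j.castLE M.hrs) < M.d j) ∧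
    M.d i < M.c (i.castLE M.hrs) ∧
    ∃ hr' : M'.r = M.r + 1, ∃ hs' : M'.s = M.s - 1,
      (∀ j : Fin M'.r, ∀ h : (j : ℕ) ≤ (i : ℕ),
        M'.c j = M.d ⟨j, lt_of_le_of_lt h i.2⟩) ∧
      (∀ j : Fin M'.r, ∀ h : (i : ℕ) < (j : ℕ),
        M'.c j = M.c ⟨(j : ℕ) - 1, by have := j.2; omega⟩) ∧
      (∀ j : Fin M'.s, ∀ h : (j : ℕ) < (i : ℕ),
        M'.d j = M.c ⟨j, by have := i.2; have := M.hrs; omega⟩) ∧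
      (∀ j : Fin M'.s, ∀ h : (i : ℕ) ≤ (j : ℕ),
        M'.d j = M.d ⟨(j : ℕ) + 1, by have := j.2; omega⟩)

/-!
Each move shortens the bottom row by one, so at most `s` moves can be made. A move is available
whenever the array is not standard: at the first descent `d_i < c_i` the new top row
`d_1 < ⋯ < d_i < c_i < ⋯ < c_r` is increasing, and so is the new bottom row
`c_1 < ⋯ < c_{i-1} < d_{i+1} < ⋯ < d_s`, because minimality of `i` gives `c_{i-1} < d_{i-1}`.
-/

theorem exists_chain_of_forall_exists_rel {α : Type*} (R : α → α → Prop) (P : α → Prop)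
    (μ : α → ℕ) (hR : ∀ a b, R a b → μ b < μ a) (hstep : ∀ a, ¬ P a → ∃ b, R a b)
    (a : α) :
    ∃ (m : ℕ) (f : Fin (m + 1) → α),
      f 0 = a ∧ (∀ i : Fin m, R (f i.castSucc) (f i.succ)) ∧ P (f (Fin.last m)) := by
  induction hμ : μ a using Nat.strong_induction_on generalizing a with
  | _ k ih =>
    by_cases ha : P a
    · exact ⟨0, fun _ => a, rfl, Fin.elim0, ha⟩
    obtain ⟨b, hab⟩ := hstep a ha
    obtain ⟨m, f, hf0, hchain, hlast⟩ := ih _ (hμ ▸ hR a b hab) b rfl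
    refine ⟨m + 1, Fin.cons a f, rfl, Fin.cases ?_ fun i => ?_, hlast⟩
    · simpa [hf0] using hab
    · simpa [← Fin.succ_castSucc] using hchain i

namespace TwoRowArray

variable {N : ℕ} (M : TwoRowArray N)

theorem c_ne_d (x : Fin M.r) (y : Fin M.s) : M.c x ≠ M.d y := fun hxy =>
  Finset.disjoint_left.mp M.disj (Finset.mem_image_of_mem _ (Finset.mem_univ x))
    (hxy ▸ Finset.mem_image_of_mem _ (Finset.mem_univ y))

theorem exists_first_descent (h : ¬ M.IsStandard) :
    ∃ i : Fin M.s, M.d i < M.c (i.castLE M.hrs) ∧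
      ∀ j : Fin M.s, j < i → M.c (j.castLE M.hrs) < M.d j := by
  have hne : ∀ j : Fin M.s, M.c (j.castLE M.hrs) < M.d j ↔ ¬ M.d j < M.c (j.castLE M.hrs) :=
    fun j => by rw [not_lt]; exact ⟨le_of_lt, fun hj => lt_of_le_of_ne hj (M.c_ne_d _ _)⟩
  obtain ⟨i, hi, hmin⟩ := wellFounded_lt.has_min {j | M.d j < M.c (j.castLE M.hrs)}
    (by simpa [IsStandard, hne, Set.Nonempty] using h)
  exact ⟨i, hi, fun j hj => (hne j).2 fun hdj => hmin j hdj hj⟩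

variable (i : Fin M.s)

def bumpTop : Fin (M.r + 1) → ℕ := fun j =>
  if hj : (j : ℕ) ≤ i then M.d ⟨j, by omega⟩
  else M.c ⟨j - 1, by have := j.2; omega⟩

def bumpBottom : Fin (M.s - 1) → ℕ := fun j =>
  if hj : (j : ℕ) < i then M.c ⟨j, by have := M.hrs; omega⟩
  else M.d ⟨j + 1, by have := j.2; omega⟩

variable {M i}

theorem strictMono_bumpTop (hi : M.d i < M.c (i.castLE M.hrs)) : StrictMono (M.bumpTop i) := by
  intro j k (hjk : (j : ℕ) < k)
  unfold bumpTop
  split_ifs with hj hk hk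
  · exact M.hd (Fin.mk_lt_mk.mpr hjk)
  · calc M.d ⟨j, _⟩ ≤ M.d i := M.hd.monotone (Fin.mk_le_mk.mpr hj)
      _ < M.c (i.castLE M.hrs) := hi
      _ ≤ M.c ⟨k - 1, _⟩ := M.hc.monotone (Fin.mk_le_mk.mpr (by omega))
  · omega
  · exact M.hc (Fin.mk_lt_mk.mpr (by omega))

theorem strictMono_bumpBottom (hmin : ∀ j : Fin M.s, j < i → M.c (j.castLE M.hrs) < M.d j) :
    StrictMono (M.bumpBottom i) := by
  intro j k (hjk : (j : ℕ) < k)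
  unfold bumpBottom
  split_ifs with hj hk hk
  · exact M.hc (Fin.mk_lt_mk.mpr hjk)
  · calc M.c ⟨j, _⟩ < M.d ⟨j, _⟩ := hmin ⟨j, by omega⟩ hj
      _ ≤ M.d ⟨k + 1, _⟩ := M.hd.monotone (Fin.mk_le_mk.mpr (by omega))
  · omega
  · exact M.hd (Fin.mk_lt_mk.mpr (by omega))

theorem disjoint_bumpTop_bumpBottom :
    Disjoint (Finset.univ.image (M.bumpTop i)) (Finset.univ.image (M.bumpBottom i)) := by
  simp only [Finset.disjoint_left, Finset.mem_image, Finset.mem_univ, true_and]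
  rintro _ ⟨j, rfl⟩ ⟨k, hk⟩
  unfold bumpTop bumpBottom at *
  split_ifs at hk ⊢ with hj hk' hk'
  · exact M.c_ne_d _ _ hk
  · have := congrArg Fin.val (M.hc.injective hk)
    simp only at this
    omega
  · have := congrArg Fin.val (M.hd.injective hk)
    simp only at this
    omega
  · exact M.c_ne_d _ _ hk.symm

theorem image_bumpTop_union_image_bumpBottom_subset :
    Finset.univ.image (M.bumpTop i) ∪ Finset.univ.image (M.bumpBottom i) ⊆
      Finset.univ.image M.c ∪ Finset.univ.image M.d := by
  simp only [Finset.subset_iff, Finset.mem_union, Finset.mem_image, Finset.mem_univ, true_and]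
  rintro _ (⟨j, rfl⟩ | ⟨j, rfl⟩)
  · unfold bumpTop
    split_ifs
    exacts [Or.inr ⟨_, rfl⟩, Or.inl ⟨_, rfl⟩]
  · unfold bumpBottom
    split_ifs
    exacts [Or.inl ⟨_, rfl⟩, Or.inr ⟨_, rfl⟩]

def bump (hi : M.d i < M.c (i.castLE M.hrs))
    (hmin : ∀ j : Fin M.s, j < i → M.c (j.castLE M.hrs) < M.d j) : TwoRowArray N where
  r := M.r + 1
  s := M.s - 1
  hrs := by have := M.hrs; omega
  hsum := by have := M.hsum; have := i.2; omega
  c := M.bumpTop i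
  d := M.bumpBottom i
  hc := strictMono_bumpTop hi
  hd := strictMono_bumpBottom hmin
  disj := disjoint_bumpTop_bumpBottom
  cover := by
    refine Finset.eq_of_subset_of_card_le
      (M.cover ▸ image_bumpTop_union_image_bumpBottom_subset) ?_
    rw [Finset.card_union_of_disjoint disjoint_bumpTop_bumpBottom,
      Finset.card_image_of_injective _ (strictMono_bumpTop hi).injective,
      Finset.card_image_of_injective _ (strictMono_bumpBottom hmin).injective,
      Finset.card_univ, Finset.card_univ, Fintype.card_fin, Fintype.card_fin, Nat.card_Icc]
    have := M.hsum
    omega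

theorem moveRel_bump (hi : M.d i < M.c (i.castLE M.hrs))
    (hmin : ∀ j : Fin M.s, j < i → M.c (j.castLE M.hrs) < M.d j) :
    MoveRel M (M.bump hi hmin) := by
  refine ⟨i, fun j => hmin j, hi, rfl, rfl, fun j hj => ?_, fun j hj => ?_, fun j hj => ?_,
    fun j hj => ?_⟩ <;> simp only [bump, bumpTop, bumpBottom]
  exacts [dif_pos hj, dif_neg hj.not_ge, dif_pos hj, dif_neg hj.not_gt]

variable (M) in
theorem exists_moveRel_of_not_isStandard (h : ¬ M.IsStandard) : ∃ M', MoveRel M M' :=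
  let ⟨_, hi, hmin⟩ := M.exists_first_descent h
  ⟨_, moveRel_bump hi hmin⟩

end TwoRowArray

theorem MoveRel.s_lt {N : ℕ} {M M' : TwoRowArray N} (h : MoveRel M M') : M'.s < M.s := by
  obtain ⟨i, -, -, -, hs', -⟩ := h
  have := i.2
  omega

/-- The straightening process terminates: from any 2-row array with entries `{1, …, 2n}`,
finitely many bumping moves reach a standard Young tableau with at most two rows. -/
theorem straightening_terminates (n : ℕ) (M₀ : TwoRowArray (2 * n)) :
    ∃ (m : ℕ) (f : Fin (m + 1) → TwoRowArray (2 * n)),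
      f 0 = M₀ ∧
      (∀ i : Fin m, MoveRel (f i.castSucc) (f i.succ)) ∧
      (f (Fin.last m)).IsStandard :=
  exists_chain_of_forall_exists_rel MoveRel TwoRowArray.IsStandard TwoRowArray.s
    (fun _ _ => MoveRel.s_lt) TwoRowArray.exists_moveRel_of_not_isStandard M₀
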